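/- For n ≥ m ≥ 1 and η ∈ {+,-}, the type B Jones–Wenzl projectors satisfy the absorption rule b_{n,η,ε}·b_{m,η,ε} = b_{n,η,ε} = b_{m,η,ε}·b_{n,η,ε}, where b_{m,η,ε} is included into TL(B_n)_ε via the first m strands. -/

import Mathlib

/-! Box absorption for the type `B` Jones–Wenzl projectors:
`b_{n,η,ε} b_{m,η,ε} = b_{n,η,ε} = b_{m,η,ε} b_{n,η,ε}` for `n ≥ m ≥ 1`. -/

noncomputable section

abbrev Kq : Type := RatFunc ℂ

def qq : Kq := RatFunc.X

/-- The quantum integer `[m] = (q^m - q^{-m})/(q - q⁻¹)` in `ℂ(q)`. -/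
def qint (m : ℤ) : Kq := (qq ^ m - qq ^ (-m)) / (qq - qq⁻¹)

/-- Generators of the type `B` Temperley–Lieb algebra: `none` is `s₀`, and
`some i` is the cup-cap generator `U_{i+1}`. -/
def g : Option ℕ → FreeAlgebra Kq (Option ℕ) := FreeAlgebra.ι Kq

/-- The defining relations of the (specialized) type `B` Temperley–Lieb
algebra (on infinitely many strands, so that `TL(B_n)` sits inside for
every `n`): `U_i² = -ε(q+q⁻¹)U_i`, distant commutativity,
`U_i U_{i±1} U_i = U_i`, `s₀² = 1`, `U₁ s₀ U₁ = 0` and `s₀ U_i = U_i s₀`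
for `i ≥ 2`.  (Recall `some i` stands for `U_{i+1}`.) -/
inductive TLBRel (ε : Kq) : FreeAlgebra Kq (Option ℕ) → FreeAlgebra Kq (Option ℕ) → Prop
  | Usq (i : ℕ) :
      TLBRel ε (g (some i) * g (some i)) ((-(ε * (qq + qq⁻¹))) • g (some i))
  | Ucomm (i j : ℕ) (h : i + 2 ≤ j) :
      TLBRel ε (g (some i) * g (some j)) (g (some j) * g (some i))
  | Ubraid1 (i : ℕ) :
      TLBRel ε (g (some i) * g (some (i+1)) * g (some i)) (g (some i))
  | Ubraid2 (i : ℕ) :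
      TLBRel ε (g (some (i+1)) * g (some i) * g (some (i+1))) (g (some (i+1)))
  | s0sq : TLBRel ε (g none * g none) 1
  | UsU : TLBRel ε (g (some 0) * g none * g (some 0)) 0
  | scomm (i : ℕ) (h : 1 ≤ i) :
      TLBRel ε (g none * g (some i)) (g (some i) * g none)

/-- The (specialized) type `B` Temperley–Lieb algebra `TL(B)_ε` (on
infinitely many strands). -/
abbrev TLB (ε : Kq) := RingQuot (TLBRel ε)

/-- The generator `s₀` of `TL(B)_ε`. -/
def s0 (ε : Kq) : TLB ε := RingQuot.mkAlgHom Kq (TLBRel ε) (g none)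

/-- The generator `U_i` of `TL(B)_ε`, for `i ≥ 1`. -/
def UU (ε : Kq) (i : ℕ) : TLB ε := RingQuot.mkAlgHom Kq (TLBRel ε) (g (some (i - 1)))

/-- The subalgebra `TL(B_n)_ε ⊆ TL(B)_ε`, generated by `s₀, U₁, …, U_{n-1}`. -/
def TLBsub (ε : Kq) (n : ℕ) : Subalgebra Kq (TLB ε) :=
  Algebra.adjoin Kq ({s0 ε} ∪ {x | ∃ i, 1 ≤ i ∧ i ≤ n - 1 ∧ x = UU ε i})

/-- The type `D` generators: `UD 0 = U₀ = s₀U₁s₀` and `UD i = U_i` for `i ≥ 1`. -/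
def UD (ε : Kq) (i : ℕ) : TLB ε :=
  if i = 0 then s0 ε * UU ε 1 * s0 ε else UU ε i

/-- The subalgebra `TL(D_n)_ε ⊆ TL(B)_ε`, generated by `U₀, U₁, …, U_{n-1}`. -/
def TLDsub (ε : Kq) (n : ℕ) : Subalgebra Kq (TLB ε) :=
  Algebra.adjoin Kq {x | ∃ i ≤ n - 1, x = UD ε i}

/-- The type `B_n` Jones–Wenzl projectors `b_{n,η,ε}` (for `η = ±1`), defined by
`b_{1,η,ε} = (1 + η s₀)/2` and the recursion
`b_{n+1,η,ε} = b_{n,η,ε} + ε (q^{n-1}+q^{-(n-1)})/(q^n+q^{-n}) · b_{n,η,ε} U_n b_{n,η,ε}`. -/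
def bB (ε η : Kq) : ℕ → TLB ε
  | 0 => 1
  | 1 => (2 : Kq)⁻¹ • (1 + η • s0 ε)
  | (n+2) =>
      bB ε η (n+1) +
        (ε * (qq ^ n + qq⁻¹ ^ n) / (qq ^ (n+1) + qq⁻¹ ^ (n+1))) •
          (bB ε η (n+1) * UU ε (n+1) * bB ε η (n+1))

/-- The type `D_n` Jones–Wenzl projector `d_{n,ε} = b_{n,+,ε} + b_{n,-,ε}`. -/
def dD (ε : Kq) (n : ℕ) : TLB ε := bB ε 1 n + bB ε (-1) n

/- `b_n` has `s₀`-eigenvalue `η` on the right and is killed by `U_1, …, U_{n-1}` on the right;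
any such `X` satisfies `X b_m = X` for `m ≤ n`, because every correction term in the recursion for
`b_m` starts with `b_{m-1} U_{m-1}`. The killing property is proved by induction from
`U_k b_k U_k = jwTrace ε (k-1) • b_{k-1} U_k`, whose coefficient is `-1/jwCoeff ε (k-1)` because
`ε² = 1`. The left-hand absorption follows by applying the word-reversal anti-automorphism of
`TL(B)_ε`, which fixes every `b_n`. -/

open MulOpposite

def qsum (k : ℕ) : Kq := qq ^ k + qq⁻¹ ^ k

lemma qsum_ne_zero (k : ℕ) : qsum k ≠ 0 := by
  have hq : (qq : Kq) ≠ 0 := RatFunc.X_ne_zero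
  have hpoly : (Polynomial.X ^ (2 * k) + 1 : Polynomial ℂ) ≠ 0 := fun h => by
    simpa using congrArg (Polynomial.eval 1) h
  have hmul : qq ^ k * qsum k = algebraMap (Polynomial ℂ) Kq (Polynomial.X ^ (2 * k) + 1) := by
    rw [qsum, mul_add, ← pow_add, ← two_mul, ← mul_pow, mul_inv_cancel₀ hq, one_pow]
    simp [qq, RatFunc.algebraMap_X]
  intro h
  apply hpoly
  apply RatFunc.algebraMap_injective ℂ
  rw [← hmul, h, mul_zero, map_zero]

lemma qsum_add_two (k : ℕ) : qsum (k + 2) = (qq + qq⁻¹) * qsum (k + 1) - qsum k := by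
  have hq : (qq : Kq) ≠ 0 := RatFunc.X_ne_zero
  simp only [qsum]
  linear_combination (-(qq ^ k) - qq⁻¹ ^ k) * mul_inv_cancel₀ hq

def jwCoeff (ε : Kq) (k : ℕ) : Kq := ε * qsum k / qsum (k + 1)

def jwTrace (ε : Kq) (k : ℕ) : Kq := -(ε * qsum (k + 1) / qsum k)

lemma jwCoeff_mul_jwTrace {ε : Kq} (hε : ε * ε = 1) (k : ℕ) :
    jwCoeff ε k * jwTrace ε k = -1 := by
  have := qsum_ne_zero k
  have := qsum_ne_zero (k + 1)
  rw [jwCoeff, jwTrace]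
  field_simp
  linear_combination -hε

lemma jwTrace_zero (ε : Kq) : jwTrace ε 0 = (2 : Kq)⁻¹ * -(ε * (qq + qq⁻¹)) := by
  simp only [jwTrace, qsum, zero_add, pow_one, pow_zero, mul_neg, neg_inj]
  ring

lemma jwTrace_succ (ε : Kq) (k : ℕ) :
    jwTrace ε (k + 1) = -(ε * (qq + qq⁻¹)) + jwCoeff ε k := by
  have := qsum_ne_zero (k + 1)
  rw [jwTrace, jwCoeff, qsum_add_two]
  field_simp
  ring

section Relations

variable {ε : Kq}

lemma mkAlgHom_g_none : RingQuot.mkAlgHom Kq (TLBRel ε) (g none) = s0 ε := rfl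

lemma mkAlgHom_g_some (i : ℕ) :
    RingQuot.mkAlgHom Kq (TLBRel ε) (g (some i)) = UU ε (i + 1) := rfl

lemma UU_mul_self (i : ℕ) :
    UU ε (i + 1) * UU ε (i + 1) = (-(ε * (qq + qq⁻¹))) • UU ε (i + 1) := by
  have hrel := RingQuot.mkAlgHom_rel Kq (TLBRel.Usq (ε := ε) i)
  simp only [map_mul, map_smul] at hrel
  exact hrel

lemma commute_UU_UU {i j : ℕ} (h : i + 2 ≤ j) : Commute (UU ε (i + 1)) (UU ε (j + 1)) := by
  have hrel := RingQuot.mkAlgHom_rel Kq (TLBRel.Ucomm (ε := ε) i j h)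
  simp only [map_mul] at hrel
  exact hrel

lemma UU_mul_UU_mul_UU_succ (i : ℕ) :
    UU ε (i + 1) * UU ε (i + 2) * UU ε (i + 1) = UU ε (i + 1) := by
  have hrel := RingQuot.mkAlgHom_rel Kq (TLBRel.Ubraid1 (ε := ε) i)
  simp only [map_mul] at hrel
  exact hrel

lemma UU_succ_mul_UU_mul_UU_succ (i : ℕ) :
    UU ε (i + 2) * UU ε (i + 1) * UU ε (i + 2) = UU ε (i + 2) := by
  have hrel := RingQuot.mkAlgHom_rel Kq (TLBRel.Ubraid2 (ε := ε) i)
  simp only [map_mul] at hrel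
  exact hrel

lemma s0_mul_self : s0 ε * s0 ε = 1 := by
  have hrel := RingQuot.mkAlgHom_rel Kq (TLBRel.s0sq (ε := ε))
  simp only [map_mul, map_one] at hrel
  exact hrel

lemma UU_one_mul_s0_mul_UU_one : UU ε 1 * s0 ε * UU ε 1 = 0 := by
  have hrel := RingQuot.mkAlgHom_rel Kq (TLBRel.UsU (ε := ε))
  simp only [map_mul, map_zero] at hrel
  exact hrel

lemma commute_s0_UU (i : ℕ) : Commute (s0 ε) (UU ε (i + 2)) := by
  have hrel := RingQuot.mkAlgHom_rel Kq (TLBRel.scomm (ε := ε) (i + 1) (by omega))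
  simp only [map_mul] at hrel
  exact hrel

end Relations

def TLB.revFree (ε : Kq) : FreeAlgebra Kq (Option ℕ) →ₐ[Kq] (TLB ε)ᵐᵒᵖ :=
  FreeAlgebra.lift Kq fun x => op (RingQuot.mkAlgHom Kq (TLBRel ε) (g x))

lemma TLB.revFree_g (ε : Kq) (x : Option ℕ) :
    TLB.revFree ε (g x) = op (RingQuot.mkAlgHom Kq (TLBRel ε) (g x)) :=
  FreeAlgebra.lift_ι_apply _ _

def TLB.rev (ε : Kq) : TLB ε →ₐ[Kq] (TLB ε)ᵐᵒᵖ :=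
  RingQuot.liftAlgHom Kq
    ⟨TLB.revFree ε, by
      intro a b h
      cases h <;>
        simp only [map_mul, map_smul, map_one, map_zero, TLB.revFree_g, mkAlgHom_g_none,
          mkAlgHom_g_some, ← op_mul, ← op_smul, ← op_one, ← op_zero, op_inj]
      case Usq i => exact UU_mul_self i
      case Ucomm i j hij => exact (commute_UU_UU hij).symm
      case Ubraid1 i => rw [← mul_assoc]; exact UU_mul_UU_mul_UU_succ i
      case Ubraid2 i => rw [← mul_assoc]; exact UU_succ_mul_UU_mul_UU_succ i
      case s0sq => exact s0_mul_self
      case UsU => rw [← mul_assoc]; exact UU_one_mul_s0_mul_UU_one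
      case scomm i hi =>
        obtain ⟨i, rfl⟩ := Nat.exists_eq_add_of_le' hi
        exact (commute_s0_UU i).symm⟩

lemma TLB.rev_mkAlgHom_g (ε : Kq) (x : Option ℕ) :
    TLB.rev ε (RingQuot.mkAlgHom Kq (TLBRel ε) (g x)) =
      op (RingQuot.mkAlgHom Kq (TLBRel ε) (g x)) :=
  (RingQuot.liftAlgHom_mkAlgHom_apply _ _ _ _).trans (TLB.revFree_g ε x)

lemma TLB.rev_s0 (ε : Kq) : TLB.rev ε (s0 ε) = op (s0 ε) := TLB.rev_mkAlgHom_g ε none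

lemma TLB.rev_UU (ε : Kq) (i : ℕ) : TLB.rev ε (UU ε i) = op (UU ε i) :=
  TLB.rev_mkAlgHom_g ε (some (i - 1))

lemma TLB.swap_mul_eq_of_rev {ε : Kq} {a b c : TLB ε} (ha : TLB.rev ε a = op a)
    (hb : TLB.rev ε b = op b) (hc : TLB.rev ε c = op c) (h : a * b = c) : b * a = c := by
  apply op_injective
  rw [op_mul, ← ha, ← hb, ← map_mul, h, hc]

section Projectors

lemma bB_add_two (ε η : Kq) (k : ℕ) :
    bB ε η (k + 2) =
      bB ε η (k + 1) + jwCoeff ε k • (bB ε η (k + 1) * UU ε (k + 1) * bB ε η (k + 1)) :=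
  rfl

lemma TLB.rev_bB (ε η : Kq) : ∀ n, TLB.rev ε (bB ε η n) = op (bB ε η n)
  | 0 => map_one _
  | 1 => by simp only [bB, map_smul, map_add, map_one, TLB.rev_s0, op_smul, op_add, op_one]
  | k + 2 => by
    simp only [bB_add_two, map_add, map_smul, map_mul, TLB.rev_bB ε η (k + 1), TLB.rev_UU,
      ← op_mul, ← op_smul, ← op_add, mul_assoc]

variable {ε η : Kq}

lemma commute_UU_bB {n j : ℕ} (h : n ≤ j) : Commute (UU ε (j + 1)) (bB ε η n) := by
  induction n using Nat.twoStepInduction with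
  | zero => exact Commute.one_right _
  | one =>
    obtain ⟨i, rfl⟩ := Nat.exists_eq_add_of_le' h
    exact ((Commute.one_right _).add_right ((commute_s0_UU i).symm.smul_right η)).smul_right _
  | more k _ ih =>
    have hb := ih (by omega)
    have hU : Commute (UU ε (j + 1)) (UU ε (k + 1)) := (commute_UU_UU (by omega)).symm
    exact hb.add_right (((hb.mul_right hU).mul_right hb).smul_right _)

lemma bB_mul_s0 (hη : η * η = 1) (k : ℕ) :
    bB ε η (k + 1) * s0 ε = η • bB ε η (k + 1) := by
  induction k with
  | zero =>
    rw [zero_add, bB, smul_mul_assoc, add_mul, one_mul, smul_mul_assoc, s0_mul_self, smul_comm η,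
      smul_add η, smul_smul, hη, one_smul, add_comm]
  | succ k ih =>
    rw [bB_add_two, add_mul, smul_mul_assoc, mul_assoc _ (bB ε η (k + 1)), ih, mul_smul_comm,
      smul_add, smul_comm η]

lemma mul_bB_eq_self (hη : η * η = 1) {X : TLB ε} (hs : X * s0 ε = η • X) :
    ∀ {M : ℕ}, (∀ i, 1 ≤ i → i < M → X * UU ε i = 0) → X * bB ε η M = X
  | 0, _ => mul_one X
  | 1, _ => by
    rw [bB, mul_smul_comm, mul_add, mul_one, mul_smul_comm, hs, smul_smul, hη, one_smul,
      ← two_smul Kq X, smul_smul, inv_mul_cancel₀ two_ne_zero, one_smul]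
  | M + 2, hU => by
    rw [bB_add_two, mul_add, mul_smul_comm, ← mul_assoc, ← mul_assoc,
      mul_bB_eq_self hη hs fun i h1 h2 => hU i h1 (by omega), hU (M + 1) (by omega) (by omega),
      zero_mul, smul_zero, add_zero]

lemma isIdempotentElem_bB_of (hη : η * η = 1) {n : ℕ}
    (hU : ∀ i, 1 ≤ i → i < n → bB ε η n * UU ε i = 0) :
    IsIdempotentElem (bB ε η n) := by
  cases n with
  | zero => exact IsIdempotentElem.one
  | succ k => exact mul_bB_eq_self hη (bB_mul_s0 hη k) hU

lemma UU_mul_bB_mul_UU_zero :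
    UU ε 1 * bB ε η 1 * UU ε 1 = jwTrace ε 0 • (bB ε η 0 * UU ε 1) := by
  have hU : UU ε 1 * UU ε 1 = (-(ε * (qq + qq⁻¹))) • UU ε 1 := UU_mul_self 0
  calc UU ε 1 * bB ε η 1 * UU ε 1
        = (2 : Kq)⁻¹ • (UU ε 1 * UU ε 1 + η • (UU ε 1 * s0 ε * UU ε 1)) := by
        simp only [bB, mul_smul_comm, smul_mul_assoc, mul_add, add_mul, mul_one]
    _ = jwTrace ε 0 • (bB ε η 0 * UU ε 1) := by
        rw [hU, UU_one_mul_s0_mul_UU_one, smul_zero, add_zero, jwTrace_zero, bB, one_mul, mul_smul]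

lemma UU_mul_bB_mul_UU_succ {k : ℕ} (hb : IsIdempotentElem (bB ε η (k + 1))) :
    UU ε (k + 2) * bB ε η (k + 2) * UU ε (k + 2) =
      jwTrace ε (k + 1) • (bB ε η (k + 1) * UU ε (k + 2)) := by
  set b := bB ε η (k + 1)
  have hc : Commute (UU ε (k + 2)) b := commute_UU_bB le_rfl
  have h1 :
      UU ε (k + 2) * b * UU ε (k + 2) = (-(ε * (qq + qq⁻¹))) • (b * UU ε (k + 2)) := by
    rw [hc.eq, mul_assoc, UU_mul_self, mul_smul_comm]
  have h2 : UU ε (k + 2) * (b * UU ε (k + 1) * b) * UU ε (k + 2) = b * UU ε (k + 2) :=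
    calc _ = b * (UU ε (k + 2) * UU ε (k + 1) * UU ε (k + 2)) * b := by
            simp only [mul_assoc]
            rw [← hc.eq]
            simp only [← mul_assoc]
            rw [hc.eq]
      _ = b * UU ε (k + 2) := by
            rw [UU_succ_mul_UU_mul_UU_succ, mul_assoc, hc.eq, ← mul_assoc, hb.eq]
  rw [bB_add_two, mul_add, add_mul, mul_smul_comm, smul_mul_assoc, h1, h2, jwTrace_succ, add_smul]

lemma UU_mul_bB_mul_UU (hη : η * η = 1) {k : ℕ}
    (hU : ∀ i, 1 ≤ i → i < k → bB ε η k * UU ε i = 0) :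
    UU ε (k + 1) * bB ε η (k + 1) * UU ε (k + 1) =
      jwTrace ε k • (bB ε η k * UU ε (k + 1)) := by
  cases k with
  | zero => exact UU_mul_bB_mul_UU_zero
  | succ k => exact UU_mul_bB_mul_UU_succ (isIdempotentElem_bB_of hη hU)

lemma bB_add_two_mul_UU_eq_zero (hε : ε * ε = 1) (hη : η * η = 1) {k : ℕ}
    (hU : ∀ i, 1 ≤ i → i < k + 1 → bB ε η (k + 1) * UU ε i = 0)
    (hE : UU ε (k + 1) * bB ε η (k + 1) * UU ε (k + 1) =
      jwTrace ε k • (bB ε η k * UU ε (k + 1)))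
    (i : ℕ) (h1 : 1 ≤ i) (h2 : i < k + 2) : bB ε η (k + 2) * UU ε i = 0 := by
  set b := bB ε η (k + 1)
  rw [bB_add_two, add_mul, smul_mul_assoc]
  rcases Nat.lt_or_ge i (k + 1) with hi | hi
  · rw [mul_assoc _ b, hU i h1 hi, mul_zero, smul_zero, add_zero]
  · obtain rfl : i = k + 1 := by omega
    have habs : b * bB ε η k = b :=
      mul_bB_eq_self hη (bB_mul_s0 hη k) fun i h1 h2 => hU i h1 (by omega)
    have hbUbU : b * UU ε (k + 1) * b * UU ε (k + 1) = jwTrace ε k • (b * UU ε (k + 1)) := by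
      calc _ = b * (UU ε (k + 1) * b * UU ε (k + 1)) := by simp only [mul_assoc]
        _ = jwTrace ε k • (b * UU ε (k + 1)) := by rw [hE, mul_smul_comm, ← mul_assoc, habs]
    rw [hbUbU, smul_smul, jwCoeff_mul_jwTrace hε, neg_one_smul, add_neg_cancel]

theorem bB_mul_UU_eq_zero (hε : ε * ε = 1) (hη : η * η = 1) :
    ∀ n i, 1 ≤ i → i < n → bB ε η n * UU ε i = 0
  | 0, _, _, h => absurd h (Nat.not_lt_zero _)
  | 1, _, h1, h2 => absurd h2 (by omega)
  | k + 2, i, h1, h2 =>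
    bB_add_two_mul_UU_eq_zero hε hη (bB_mul_UU_eq_zero hε hη (k + 1))
      (UU_mul_bB_mul_UU hη (bB_mul_UU_eq_zero hε hη k)) i h1 h2

end Projectors

theorem stmt12_general (ε η : Kq) (hε : ε = 1 ∨ ε = -1) (hη : η = 1 ∨ η = -1)
    (n m : ℕ) (hmn : m ≤ n) :
    bB ε η n * bB ε η m = bB ε η n ∧ bB ε η m * bB ε η n = bB ε η n := by
  have hε2 : ε * ε = 1 := by rcases hε with rfl | rfl <;> norm_num
  have hη2 : η * η = 1 := by rcases hη with rfl | rfl <;> norm_num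
  have hnm : bB ε η n * bB ε η m = bB ε η n := by
    cases n with
    | zero => rw [Nat.le_zero.1 hmn]; exact mul_one 1
    | succ k =>
      exact mul_bB_eq_self hη2 (bB_mul_s0 hη2 k) fun i h1 h2 =>
        bB_mul_UU_eq_zero hε2 hη2 (k + 1) i h1 (by omega)
  have hrev := TLB.rev_bB ε η
  exact ⟨hnm, TLB.swap_mul_eq_of_rev (hrev n) (hrev m) (hrev n) hnm⟩

theorem stmt12 (ε η : Kq) (hε : ε = 1 ∨ ε = -1) (hη : η = 1 ∨ η = -1)
    (n m : ℕ) (hm : 1 ≤ m) (hmn : m ≤ n) :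
    bB ε η n * bB ε η m = bB ε η n ∧ bB ε η m * bB ε η n = bB ε η n :=
  stmt12_general ε η hε hη n m hmn

end
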